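/- arXiv:2402.18961 — 2 statements merged into one kernel-verified Lean document; each statement's English description precedes it below -/
import Mathlib

section
/- Let N, k ∈ ℕ* with k ≤ N, let 1 ≤ j_1 < … < j_k ≤ N, let m_1 < m_2 < … < m_N < n be natural numbers with m_1 = 1, set m_{N+1} := n, and let I_j := (m_j, m_{j+1}] ∩ ℕ for j = 1,…,N and I_s^N := I_s ∪ … ∪ I_N. Let r_1, …, r_k be pairwise distinct with r_h ∈ I_{j_h}^N for each h, and set j_{k+1} := N+1. Then ∑_{h=1}^{k} |(m_{j_h}, r_h) ∩ {m_1,…,m_N} ∩ ({m_{j_1},…,m_{j_k}})ᶜ| = ∑_{p=1}^{k-1} ∑_{s : j_p < s < j_{p+1}} |I_s^N ∩ {r_1,…,r_p}| + ∑_{s > j_k, s ≤ N} |I_s^N ∩ {r_1,…,r_k}|. -/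
/-!
Both sides count the pairs `(h, s)` with `1 ≤ h ≤ k`, `s ∈ {1, …, N}` not among the `j`'s,
`j_h < s` and `m_s < r_h`. On the left, `m_s` runs over the points of `{m_1, …, m_N}` strictly
between `m_{j_h}` and `r_h`. On the right, `I_s^N = (m_s, n]`, the free indices `s` with
`j_1 < s` fall into the gaps `(j_p, j_{p+1})`, and for `s` in the gap after `j_p` the condition
`j_h < s` means `h ≤ p`; free indices `s < j_1` contribute nothing.
-/

open Finset

lemma Finset.biUnion_Icc_Ioc_eq_Ioc {β : Type*} [LinearOrder β] [LocallyFiniteOrder β]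
    {m : ℕ → β} {a b : ℕ} (hab : a ≤ b + 1) (hm : MonotoneOn m (Set.Icc a (b + 1))) :
    (Icc a b).biUnion (fun t => Ioc (m t) (m (t + 1))) = Ioc (m a) (m (b + 1)) := by
  rw [← Ico_add_one_right_eq_Icc]
  generalize b + 1 = c at hab hm ⊢
  induction c, hab using Nat.le_induction with
  | base => simp
  | succ b hab ih =>
    rw [← insert_Ico_right_eq_Ico_add_one hab, biUnion_insert,
      ih (hm.mono (Set.Icc_subset_Icc_right b.le_succ)), union_comm,
      Ioc_union_Ioc_eq_Ioc (hm ⟨le_rfl, by omega⟩ ⟨hab, by omega⟩ hab)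
        (hm ⟨by omega, by omega⟩ ⟨by omega, le_rfl⟩ b.le_succ)]

lemma Finset.card_inter_image_of_injOn {α β : Type*} [DecidableEq β] {f : α → β}
    {s : Finset α} {t : Finset β} (hf : Set.InjOn f s) :
    #(t ∩ s.image f) = #{a ∈ s | f a ∈ t} := by
  rw [inter_comm, ← filter_mem_eq_inter, filter_image,
    card_image_of_injOn (hf.mono (filter_subset _ s))]

lemma Finset.card_Ioc_inter_image_of_le {α β : Type*} [LinearOrder β] [LocallyFiniteOrder β]
    {f : α → β} {s : Finset α} (hf : Set.InjOn f s) {a b : β} (hb : ∀ x ∈ s, f x ≤ b) :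
    #(Ioc a b ∩ s.image f) = #{x ∈ s | a < f x} := by
  rw [card_inter_image_of_injOn hf]
  refine congrArg card (filter_congr fun x hx => ?_)
  rw [mem_Ioc, and_iff_left (hb x hx)]

lemma Finset.card_Ioo_inter_image_sdiff_image {α β : Type*} [LinearOrder α] [LinearOrder β]
    [LocallyFiniteOrder β] {m : α → β} {A J : Finset α} (hm : StrictMonoOn m A) (hJ : J ⊆ A)
    {a : α} (ha : a ∈ A) (x : β) :
    #((Ioo (m a) x ∩ A.image m) \ J.image m) = #{t ∈ A \ J | a < t ∧ m t < x} := by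
  rw [inter_sdiff_assoc, ← image_sdiff_of_injOn hm.injOn hJ,
    card_inter_image_of_injOn (hm.injOn.mono (by simp))]
  refine congrArg card (filter_congr fun t ht => ?_)
  rw [mem_Ioo, hm.lt_iff_lt ha (mem_sdiff.1 ht).1]

lemma Finset.sum_Icc_sdiff_eq_sum_Ioo_sdiff {M : Type*} [AddCommMonoid M] {f : ℕ → M}
    {a : ℕ} (N : ℕ) (J : Finset ℕ) (hf : ∀ s ≤ a, f s = 0) :
    ∑ s ∈ Icc 1 N \ J, f s = ∑ s ∈ Ioo a (N + 1) \ J, f s := by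
  refine (sum_subset (sdiff_subset_sdiff (fun s hs => ?_) le_rfl) fun s hs hs' => hf s ?_).symm
  · rw [mem_Ioo] at hs
    rw [mem_Icc]
    omega
  · rw [mem_sdiff, mem_Icc] at hs
    rw [mem_sdiff, mem_Ioo] at hs'
    by_contra has
    exact hs' ⟨⟨by omega, by omega⟩, hs.2⟩

lemma Finset.sum_Icc_sub_one_add {M : Type*} [AddCommMonoid M] {k : ℕ} (hk : 1 ≤ k)
    (f : ℕ → M) : ∑ p ∈ Icc 1 (k - 1), f p + f k = ∑ p ∈ Icc 1 k, f p := by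
  obtain ⟨k, rfl⟩ := Nat.exists_eq_add_of_le' hk
  rw [sum_Icc_succ_top (by omega), Nat.add_sub_cancel]

section Gaps

variable {j : ℕ → ℕ} {k : ℕ}

lemma Ioo_sdiff_image_Icc_add_one (hj : MonotoneOn j (Set.Icc 1 (k + 2))) :
    Ioo (j 1) (j (k + 2)) \ (Icc 1 (k + 1)).image j
      = (Ioo (j 1) (j (k + 1)) \ (Icc 1 k).image j) ∪ Ioo (j (k + 1)) (j (k + 2)) := by
  have hbound : ∀ q, 1 ≤ q → q ≤ k + 1 → j 1 ≤ j q ∧ j q ≤ j (k + 1) := fun q h1 hq =>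
    ⟨hj ⟨le_rfl, by omega⟩ ⟨h1, by omega⟩ h1, hj ⟨h1, by omega⟩ ⟨by omega, by omega⟩ hq⟩
  have hle : j (k + 1) ≤ j (k + 2) := hj ⟨by omega, by omega⟩ ⟨by omega, le_rfl⟩ (by omega)
  ext s
  simp only [mem_sdiff, mem_union, mem_Ioo, mem_image, mem_Icc, not_exists, not_and]
  constructor
  · rintro ⟨⟨h1s, hs2⟩, hfree⟩
    rcases lt_trichotomy s (j (k + 1)) with hs | rfl | hs
    · exact .inl ⟨⟨h1s, hs⟩, fun q hq => hfree q ⟨hq.1, by omega⟩⟩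
    · exact absurd rfl (hfree (k + 1) ⟨by omega, le_rfl⟩)
    · exact .inr ⟨hs, hs2⟩
  · rintro (⟨⟨h1s, hs⟩, hfree⟩ | ⟨hs, hs2⟩)
    · refine ⟨⟨h1s, hs.trans_le hle⟩, fun q hq hqs => ?_⟩
      rcases (show q ≤ k ∨ q = k + 1 by omega) with hqk | rfl
      · exact hfree q ⟨hq.1, hqk⟩ hqs
      · omega
    · refine ⟨⟨(hbound (k + 1) (by omega) le_rfl).1.trans_lt hs, hs2⟩, fun q hq hqs => ?_⟩
      have := (hbound q hq.1 hq.2).2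
      omega

lemma sum_sum_Ioo_eq_sum_Ioo_sdiff_image {M : Type*} [AddCommMonoid M] (f : ℕ → M)
    (hj : MonotoneOn j (Set.Icc 1 (k + 1))) :
    ∑ p ∈ Icc 1 k, ∑ s ∈ Ioo (j p) (j (p + 1)), f s
      = ∑ s ∈ Ioo (j 1) (j (k + 1)) \ (Icc 1 k).image j, f s := by
  induction k with
  | zero => simp
  | succ k ih =>
    have hdisj : Disjoint (Ioo (j 1) (j (k + 1)) \ (Icc 1 k).image j)
        (Ioo (j (k + 1)) (j (k + 2))) :=
      disjoint_left.2 fun s hs hs' => by simp only [mem_sdiff, mem_Ioo] at hs hs'; omega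
    rw [sum_Icc_succ_top (by omega), ih (hj.mono (Set.Icc_subset_Icc_right (by omega))),
      Ioo_sdiff_image_Icc_add_one hj, sum_union hdisj]

lemma Ioo_subset_Ioo_of_mem_Icc (hj : MonotoneOn j (Set.Icc 1 (k + 1))) {p : ℕ}
    (hp : p ∈ Icc 1 k) : Ioo (j p) (j (p + 1)) ⊆ Ioo (j 1) (j (k + 1)) := by
  rw [mem_Icc] at hp
  exact Ioo_subset_Ioo (hj ⟨le_rfl, by omega⟩ ⟨hp.1, by omega⟩ hp.1)
    (hj ⟨by omega, by omega⟩ ⟨by omega, le_rfl⟩ (by omega))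

lemma filter_lt_eq_Icc_of_mem_Ioo (hj : MonotoneOn j (Set.Icc 1 (k + 1))) {p s : ℕ}
    (hp : p ∈ Icc 1 k) (hs : s ∈ Ioo (j p) (j (p + 1))) :
    {h ∈ Icc 1 k | j h < s} = Icc 1 p := by
  rw [mem_Icc] at hp
  rw [mem_Ioo] at hs
  ext h
  simp only [mem_filter, mem_Icc]
  constructor
  · rintro ⟨⟨h1, hk⟩, hjs⟩
    refine ⟨h1, not_lt.1 fun hph => ?_⟩
    have := hj ⟨by omega, by omega⟩ ⟨h1, by omega⟩ (by omega : p + 1 ≤ h)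
    omega
  · rintro ⟨h1, hhp⟩
    exact ⟨⟨h1, by omega⟩, (hj ⟨h1, by omega⟩ ⟨by omega, by omega⟩ hhp).trans_lt hs.1⟩

lemma filter_lt_eq_empty_of_le (hj : MonotoneOn j (Set.Icc 1 (k + 1))) {s : ℕ} (hs : s ≤ j 1) :
    {h ∈ Icc 1 k | j h < s} = ∅ :=
  filter_eq_empty_iff.2 fun h hh => by
    rw [mem_Icc] at hh
    have := hj ⟨le_rfl, by omega⟩ ⟨hh.1, by omega⟩ hh.1
    omega

end Gaps

theorem quon_weight_key_identity_general (N k n : ℕ) (hk : 1 ≤ k)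
    (m : ℕ → ℕ) (hm : StrictMonoOn m (Set.Icc 1 (N + 1)))
    (hmN1 : m (N + 1) = n)
    (j : ℕ → ℕ) (hjmono : StrictMonoOn j (Set.Icc 1 (k + 1)))
    (hj1 : 1 ≤ j 1) (hjk : j k ≤ N) (hjk1 : j (k + 1) = N + 1)
    (r : ℕ → ℕ)
    (hr : ∀ h ∈ Finset.Icc 1 k,
      r h ∈ (Finset.Icc (j h) N).biUnion (fun t => Finset.Ioc (m t) (m (t + 1))))
    (hrinj : Set.InjOn r (Set.Icc 1 k)) :
    ∑ h ∈ Finset.Icc 1 k,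
      ((Finset.Ioo (m (j h)) (r h) ∩ (Finset.Icc 1 N).image m) \
        (Finset.Icc 1 k).image (fun p => m (j p))).card
      = ∑ p ∈ Finset.Icc 1 (k - 1), ∑ s ∈ Finset.Ioo (j p) (j (p + 1)),
          (((Finset.Icc s N).biUnion (fun t => Finset.Ioc (m t) (m (t + 1)))) ∩
            (Finset.Icc 1 p).image r).card
        + ∑ s ∈ Finset.Ioc (j k) N,
            (((Finset.Icc s N).biUnion (fun t => Finset.Ioc (m t) (m (t + 1)))) ∩
              (Finset.Icc 1 k).image r).card := by
  have hj := hjmono.monotoneOn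
  set J := (Icc 1 k).image j
  set c : ℕ → ℕ := fun s => #{h ∈ Icc 1 k | j h < s ∧ m s < r h}
  have hjJ : J ⊆ Icc 1 N := image_subset_iff.2 fun q hq => by
    have := (hj.mono (Set.Icc_subset_Icc_right k.le_succ)).mapsTo_Icc (Set.mem_Icc.2 (mem_Icc.1 hq))
    exact mem_Icc.2 ⟨hj1.trans this.1, this.2.trans hjk⟩
  have hI : ∀ s ∈ Icc 1 N, (Icc s N).biUnion (fun t => Ioc (m t) (m (t + 1))) = Ioc (m s) n :=
    fun s hs => hmN1 ▸ biUnion_Icc_Ioc_eq_Ioc (by rw [mem_Icc] at hs; omega)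
      (hm.monotoneOn.mono (Set.Icc_subset_Icc_left (mem_Icc.1 hs).1))
  have hrn : ∀ h ∈ Icc 1 k, r h ≤ n := fun h hh =>
    (mem_Ioc.1 (hI (j h) (hjJ (mem_image_of_mem j hh)) ▸ hr h hh)).2
  have hgap : ∀ p ∈ Icc 1 k, ∀ s ∈ Ioo (j p) (j (p + 1)),
      #((Icc s N).biUnion (fun t => Ioc (m t) (m (t + 1))) ∩ (Icc 1 p).image r) = c s := by
    intro p hp s hs
    have hsN : s ∈ Icc 1 N := by
      have := mem_Ioo.1 (Ioo_subset_Ioo_of_mem_Icc hj hp hs)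
      rw [mem_Icc]
      omega
    have hpk : Icc 1 p ⊆ Icc 1 k := Icc_subset_Icc_right (mem_Icc.1 hp).2
    rw [hI s hsN,
      card_Ioc_inter_image_of_le (hrinj.mono (by rw [← coe_Icc]; exact coe_subset.2 hpk))
        fun h hh => hrn h (hpk hh),
      ← filter_lt_eq_Icc_of_mem_Ioo hj hp hs, filter_filter]
  calc ∑ h ∈ Icc 1 k, #((Ioo (m (j h)) (r h) ∩ (Icc 1 N).image m) \
          (Icc 1 k).image (fun p => m (j p)))
      = ∑ h ∈ Icc 1 k, #{t ∈ Icc 1 N \ J | j h < t ∧ m t < r h} := by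
        refine sum_congr rfl fun h hh => ?_
        rw [show (Icc 1 k).image (fun p => m (j p)) = J.image m from image_image.symm,
          card_Ioo_inter_image_sdiff_image
            (hm.mono (by rw [coe_Icc]; exact Set.Icc_subset_Icc_right N.le_succ)) hjJ
            (hjJ (mem_image_of_mem j hh))]
    _ = ∑ s ∈ Icc 1 N \ J, c s := sum_card_bipartiteAbove_eq_sum_card_bipartiteBelow _
    _ = ∑ s ∈ Ioo (j 1) (j (k + 1)) \ J, c s := by
        rw [hjk1]
        refine sum_Icc_sdiff_eq_sum_Ioo_sdiff N J fun s hs => ?_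
        simp only [c]
        rw [← filter_filter, filter_lt_eq_empty_of_le hj hs, filter_empty, card_empty]
    _ = ∑ p ∈ Icc 1 k, ∑ s ∈ Ioo (j p) (j (p + 1)), c s :=
        (sum_sum_Ioo_eq_sum_Ioo_sdiff_image c hj).symm
    _ = _ := by
        rw [← sum_Icc_sub_one_add hk, ← Ioo_add_one_right_eq_Ioc, ← hjk1]
        congr 1
        · exact sum_congr rfl fun p hp => sum_congr rfl fun s hs =>
            (hgap p (Icc_subset_Icc_right (by omega) hp) s hs).symm
        · exact sum_congr rfl fun s hs => (hgap k (by simp [hk]) s hs).symm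

/-- the key combinatorial identity (QuanAlg14f):
`∑_{h=1}^k |(m_{j_h}, r_h) ∩ {m_1,…,m_N} ∩ ({m_{j_1},…,m_{j_k}})ᶜ|
 = ∑_{p=1}^{k-1} ∑_{j_p<s<j_{p+1}} |I_s^N ∩ {r_1,…,r_p}|
   + ∑_{j_k<s≤N} |I_s^N ∩ {r_1,…,r_k}|`. -/
theorem quon_weight_key_identity (N k n : ℕ) (hk : 1 ≤ k) (hkN : k ≤ N)
    (m : ℕ → ℕ) (hm : StrictMonoOn m (Set.Icc 1 (N + 1)))
    (hm1 : m 1 = 1) (hmN : m N < n) (hmN1 : m (N + 1) = n)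
    (j : ℕ → ℕ) (hjmono : StrictMonoOn j (Set.Icc 1 (k + 1)))
    (hj1 : 1 ≤ j 1) (hjk : j k ≤ N) (hjk1 : j (k + 1) = N + 1)
    (r : ℕ → ℕ)
    (hr : ∀ h ∈ Finset.Icc 1 k,
      r h ∈ (Finset.Icc (j h) N).biUnion (fun t => Finset.Ioc (m t) (m (t + 1))))
    (hrinj : Set.InjOn r (Set.Icc 1 k)) :
    ∑ h ∈ Finset.Icc 1 k,
      ((Finset.Ioo (m (j h)) (r h) ∩ (Finset.Icc 1 N).image m) \
        (Finset.Icc 1 k).image (fun p => m (j p))).card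
      = ∑ p ∈ Finset.Icc 1 (k - 1), ∑ s ∈ Finset.Ioo (j p) (j (p + 1)),
          (((Finset.Icc s N).biUnion (fun t => Finset.Ioc (m t) (m (t + 1)))) ∩
            (Finset.Icc 1 p).image r).card
        + ∑ s ∈ Finset.Ioc (j k) N,
            (((Finset.Icc s N).biUnion (fun t => Finset.Ioc (m t) (m (t + 1)))) ∩
              (Finset.Icc 1 k).image r).card :=
  quon_weight_key_identity_general N k n hk m hm hmN1 j hjmono hj1 hjk hjk1 r hr hrinj
end

section
/- Let ℋ be a pre-Hilbert space, q ∈ [-1,1], n ≥ 2, and let λ_n be the q-symmetrization operator on ℋ^{⊗n} defined by λ_n(g_1 ⊗ … ⊗ g_n) := ∑_{σ∈𝔖_n} q^{ρ(σ)} g_{σ(1)} ⊗ … ⊗ g_{σ(n)}. Then for all f ∈ ℋ, G ∈ ℋ^{⊗(n-1)}, and f_1,…,f_n ∈ ℋ: ⟨f ⊗ G, λ_n(f_1 ⊗ … ⊗ f_n)⟩_{⊗n} = ∑_{k=1}^{n} q^{k-1} ⟨f, f_k⟩ · ⟨G, λ_{n-1}(f_1 ⊗ … ⊗ f_{k-1}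 ⊗ f_{k+1} ⊗ … ⊗ f_n)⟩_{⊗(n-1)}. -/
/-!
Split the sum over `σ ∈ 𝔖_{N+1}` according to `k = σ 0` and write `σ = permCons k τ`. The
inversions of `σ` are then the `k` pairs `(0, j)` with `σ j < k`, together with the inversions
of `τ`, because `k.succAbove` is strictly monotone; hence `q ^ inversions σ = q ^ k * q ^ inversions τ`.
-/

/-- Number of inversions of a permutation of `Fin n`. -/
def inversions {n : ℕ} (σ : Equiv.Perm (Fin n)) : ℕ :=
  (Finset.univ.filter (fun p : Fin n × Fin n => p.1 < p.2 ∧ σ p.2 < σ p.1)).card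

open Finset

lemma inversions_eq_card_add_card {N : ℕ} (σ : Equiv.Perm (Fin (N + 1))) :
    inversions σ = #{j : Fin N | σ j.succ < σ 0} +
      #{p : Fin N × Fin N | p.1 < p.2 ∧ σ p.2.succ < σ p.1.succ} := by
  simp only [inversions, card_filter, Fintype.sum_prod_type, Fin.sum_univ_succ]
  simp [Fin.succ_pos, Fin.succ_lt_succ_iff]

lemma card_filter_succAbove_lt {N : ℕ} (k : Fin (N + 1)) (τ : Equiv.Perm (Fin N)) :
    #{j : Fin N | k.succAbove (τ j) < k} = k := by
  simp only [Fin.succAbove_lt_iff_castSucc_lt]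
  rw [card_filter, Equiv.sum_comp τ (fun j => if j.castSucc < k then 1 else 0), ← card_filter]
  simp [Fin.lt_def, Fin.card_filter_val_lt, Nat.lt_succ_iff.mp k.isLt]

def permCons {N : ℕ} (k : Fin (N + 1)) (τ : Equiv.Perm (Fin N)) : Equiv.Perm (Fin (N + 1)) :=
  ((finSuccEquiv N).trans (Equiv.optionCongr τ)).trans (finSuccEquiv' k).symm

@[simp] lemma permCons_zero {N : ℕ} (k : Fin (N + 1)) (τ : Equiv.Perm (Fin N)) :
    permCons k τ 0 = k := by simp [permCons]

@[simp] lemma permCons_succ {N : ℕ} (k : Fin (N + 1)) (τ : Equiv.Perm (Fin N)) (i : Fin N) :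
    permCons k τ i.succ = k.succAbove (τ i) := by simp [permCons]

lemma permCons_injective {N : ℕ} :
    Function.Injective (fun p : Fin (N + 1) × Equiv.Perm (Fin N) => permCons p.1 p.2) := by
  rintro ⟨k, τ⟩ ⟨k', τ'⟩ h
  obtain rfl : k = k' := by simpa using congr($h 0)
  have : τ = τ' := Equiv.ext fun i => by simpa using congr($h i.succ)
  rw [this]

noncomputable def permConsEquiv (N : ℕ) :
    Fin (N + 1) × Equiv.Perm (Fin N) ≃ Equiv.Perm (Fin (N + 1)) :=
  Equiv.ofBijective _ <| (Fintype.bijective_iff_injective_and_card _).2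
    ⟨permCons_injective, by simp [Fintype.card_perm, Nat.factorial_succ]⟩

lemma inversions_permCons {N : ℕ} (k : Fin (N + 1)) (τ : Equiv.Perm (Fin N)) :
    inversions (permCons k τ) = k + inversions τ := by
  rw [inversions_eq_card_add_card]
  simp [card_filter_succAbove_lt, Fin.succAbove_lt_succAbove_iff, inversions]

theorem sum_pow_inversions_mul_eq {R : Type*} [CommSemiring R] {N : ℕ} (x : R)
    (F : Fin (N + 1) → (Fin N → Fin (N + 1)) → R) :
    ∑ σ : Equiv.Perm (Fin (N + 1)), x ^ inversions σ * F (σ 0) (fun i => σ i.succ) =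
      ∑ k : Fin (N + 1), x ^ (k : ℕ) * ∑ τ : Equiv.Perm (Fin N), x ^ inversions τ *
        F k (fun i => k.succAbove (τ i)) := by
  rw [← (permConsEquiv N).sum_comp, Fintype.sum_prod_type]
  simp [permConsEquiv, inversions_permCons, pow_add, mul_sum, mul_assoc]

/-- Stated for elementary tensors `G = g_1 ⊗ … ⊗ g_{n-1}`, which determine both sides by
sesquilinearity; the inner product of elementary tensors is the product of the inner products.
Here `n = N + 1` and `f_k` is `fs k` with `k : Fin (N + 1)` counted from `0`, so `q^{k-1}` becomes
`q ^ (k : ℕ)`; omitting `f_k` is precomposition with `k.succAbove`. -/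
theorem q_symmetrization_recursion_general {H : Type*} [NormedAddCommGroup H]
    [InnerProductSpace ℂ H] (N : ℕ) (q : ℝ)
    (f : H) (g : Fin N → H) (fs : Fin (N + 1) → H) :
    ∑ σ : Equiv.Perm (Fin (N + 1)), (q : ℂ) ^ inversions σ *
        ((inner ℂ f (fs (σ 0)) : ℂ) *
          ∏ i : Fin N, (inner ℂ (g i) (fs (σ i.succ)) : ℂ))
      = ∑ k : Fin (N + 1), (q : ℂ) ^ (k : ℕ) * (inner ℂ f (fs k) : ℂ) *
          ∑ τ : Equiv.Perm (Fin N), (q : ℂ) ^ inversions τ *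
            ∏ i : Fin N, (inner ℂ (g i) (fs (k.succAbove (τ i))) : ℂ) := by
  refine (sum_pow_inversions_mul_eq (q : ℂ)
    fun k v => inner ℂ f (fs k) * ∏ i, inner ℂ (g i) (fs (v i))).trans ?_
  simp only [mul_assoc, mul_sum, mul_left_comm]

/-- the recursion
`⟨f ⊗ G, λ_n(f_1 ⊗ … ⊗ f_n)⟩_{⊗n}
 = ∑_{k=1}^n q^{k-1} ⟨f,f_k⟩ ⟨G, λ_{n-1}(f_1 ⊗ … f̂_k … ⊗ f_n)⟩_{⊗(n-1)}`,
stated for elementary tensors `G = g_1 ⊗ … ⊗ g_{n-1}` (which determine both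
sides by sesquilinearity): the inner product of elementary tensors is the
product of the inner products.  Here `n = N+1 ≥ 2`; permutations of `{1,…,n}`
are encoded as `Equiv.Perm (Fin (N+1))`, the `k`-th removal via `Fin.succAbove`,
and `q^{k-1}` becomes `q^(k : ℕ)` for `k : Fin (N+1)`. -/
theorem q_symmetrization_recursion {H : Type*} [NormedAddCommGroup H]
    [InnerProductSpace ℂ H] (N : ℕ) (hN : 1 ≤ N) (q : ℝ)
    (hq : -1 ≤ q ∧ q ≤ 1) (f : H) (g : Fin N → H) (fs : Fin (N + 1) → H) :
    ∑ σ : Equiv.Perm (Fin (N + 1)), (q : ℂ) ^ inversions σ *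
        ((inner ℂ f (fs (σ 0)) : ℂ) *
          ∏ i : Fin N, (inner ℂ (g i) (fs (σ i.succ)) : ℂ))
      = ∑ k : Fin (N + 1), (q : ℂ) ^ (k : ℕ) * (inner ℂ f (fs k) : ℂ) *
          ∑ τ : Equiv.Perm (Fin N), (q : ℂ) ^ inversions τ *
            ∏ i : Fin N, (inner ℂ (g i) (fs (k.succAbove (τ i))) : ℂ) :=
  q_symmetrization_recursion_general N q f g fs
end
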